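/- Fix an integer N ≥ 1, a positive integer K, real constants C1 and Csync, and a symmetric matrix J : Fin N → Fin N → ℝ. Let F : ℝ → ℝ be differentiable and even, set S = −F′, and define E(φ) = −(K·C1/2)·Σ_{i} Σ_{j ≠ i} J i j · F(φ i − φ j) − Csync·Σ_i cos(K·φ i) and V i (φ) = −C1·Σ_{j ≠ i} J i j · S(φ i − φ j) − Csync·sin(K·φ i). If φ : ℝ → (Fin N → ℝ) is differentiable and satisfies (φ i)′(t) = V i (φ(t)) for all t and i, then the function t ↦ E(φ(t)) is antitone: for all t₁ ≤ t₂, E(φ(t₂)) ≤ E(φ(t₁)). -/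

import Mathlib

/-!
The flow is a gradient flow: since `J` is symmetric and `F` is even, `∇E = -K V`.
Hence along a trajectory `d/dt E(φ t) = ∇E · φ' = -K ∑ᵢ Vᵢ(φ t)² ≤ 0`, and a function with
nonpositive derivative is antitone.
-/

open Finset

lemma Function.Even.deriv {𝕜 E : Type*} [NontriviallyNormedField 𝕜] [NormedAddCommGroup E]
    [NormedSpace 𝕜 E] {F : 𝕜 → E} (hF : Function.Even F) : Function.Odd (deriv F) := by
  intro x
  have h := deriv_comp_neg F x
  rw [show (fun y => F (-y)) = F from funext hF] at h
  rw [h, neg_neg]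

lemma sum_sum_erase_mul_sub_of_antisymm {ι R : Type*} [Fintype ι] [DecidableEq ι] [CommRing R]
    (A : ι → ι → R) (hA : ∀ a b, A b a = -A a b) (D : ι → R) :
    ∑ a, ∑ b ∈ univ.erase a, A a b * (D a - D b) =
      2 * ∑ a, D a * ∑ b ∈ univ.erase a, A a b := by
  have hswap : ∑ a, ∑ b ∈ univ.erase a, A a b * D b = -∑ a, ∑ b ∈ univ.erase a, A a b * D a := by
    rw [sum_comm' (t' := univ) (s' := fun b => univ.erase b) (by simp [and_comm, ne_comm])]
    simp only [← sum_neg_distrib]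
    exact sum_congr rfl fun a _ => sum_congr rfl fun b _ => by rw [hA, neg_mul]
  rw [mul_sum]
  simp only [mul_sub, sum_sub_distrib, hswap, sub_neg_eq_add, ← sum_add_distrib, mul_sum]
  exact sum_congr rfl fun a _ => sum_congr rfl fun b _ => by ring

section Trajectory

variable {ι : Type*} [Fintype ι] {ψ : ℝ → ι → ℝ} {D : ι → ℝ} {t : ℝ}

lemma hasDerivAt_sum_sum_erase_pair [DecidableEq ι] {J : ι → ι → ℝ}
    (hJ : ∀ a b, J a b = J b a) {F : ℝ → ℝ} (hF : Differentiable ℝ F) (hFeven : Function.Even F)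
    (hψ : ∀ a, HasDerivAt (fun s => ψ s a) (D a) t) :
    HasDerivAt (fun s => ∑ a, ∑ b ∈ univ.erase a, J a b * F (ψ s a - ψ s b))
      (2 * ∑ a, D a * ∑ b ∈ univ.erase a, J a b * deriv F (ψ t a - ψ t b)) t := by
  have hterm : ∀ a b, HasDerivAt (fun s => J a b * F (ψ s a - ψ s b))
      (J a b * deriv F (ψ t a - ψ t b) * (D a - D b)) t := fun a b => by
    rw [mul_assoc]
    exact ((hF _).hasDerivAt.comp t ((hψ a).sub (hψ b))).const_mul (J a b)
  have hodd : ∀ a b, J b a * deriv F (ψ t b - ψ t a) = -(J a b * deriv F (ψ t a - ψ t b)) :=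
    fun a b => by rw [hJ b a, ← neg_sub, hFeven.deriv, mul_neg]
  rw [← sum_sum_erase_mul_sub_of_antisymm _ hodd D]
  exact HasDerivAt.fun_sum fun a _ => HasDerivAt.fun_sum fun b _ => hterm a b

lemma hasDerivAt_sum_cos_mul (k : ℝ) (hψ : ∀ a, HasDerivAt (fun s => ψ s a) (D a) t) :
    HasDerivAt (fun s => ∑ a, Real.cos (k * ψ s a))
      (-k * ∑ a, Real.sin (k * ψ t a) * D a) t := by
  rw [mul_sum]
  refine HasDerivAt.fun_sum fun a _ => ?_
  rw [show -k * (Real.sin (k * ψ t a) * D a) = -Real.sin (k * ψ t a) * (k * D a) by ring]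
  exact ((hψ a).const_mul k).cos

end Trajectory

theorem stmt_2_general (N : ℕ) (K : ℕ) (C1 Csync : ℝ)
    (J : Fin N → Fin N → ℝ) (hJ : ∀ i j, J i j = J j i)
    (F : ℝ → ℝ) (hF : Differentiable ℝ F) (hFeven : ∀ x, F (-x) = F x)
    (S : ℝ → ℝ) (hS : ∀ x, S x = -(deriv F x))
    (E : (Fin N → ℝ) → ℝ)
    (hE : ∀ φ : Fin N → ℝ, E φ =
      -((K : ℝ) * C1 / 2) * ∑ a, ∑ b ∈ Finset.univ.erase a, J a b * F (φ a - φ b)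
        - Csync * ∑ a, Real.cos ((K : ℝ) * φ a))
    (V : Fin N → (Fin N → ℝ) → ℝ)
    (hV : ∀ (i : Fin N) (ψ : Fin N → ℝ), V i ψ =
      -C1 * ∑ j ∈ Finset.univ.erase i, J i j * S (ψ i - ψ j)
        - Csync * Real.sin ((K : ℝ) * ψ i))
    (φ : ℝ → Fin N → ℝ) (hφ : Differentiable ℝ φ)
    (hdyn : ∀ (t : ℝ) (i : Fin N), deriv (fun s => φ s i) t = V i (φ t)) :
    Antitone (fun t => E (φ t)) := by
  have hV_grad : ∀ i ψ, V i ψ =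
      C1 * ∑ j ∈ univ.erase i, J i j * deriv F (ψ i - ψ j) - Csync * Real.sin (K * ψ i) := by
    intro i ψ
    simp only [hV, hS, mul_neg, sum_neg_distrib]
    ring
  have hφ' : ∀ t i, HasDerivAt (fun s => φ s i) (V i (φ t)) t := fun t i =>
    hdyn t i ▸ ((differentiable_pi.mp hφ i) t).hasDerivAt
  refine antitone_of_hasDerivAt_nonpos (f' := fun t => -(K : ℝ) * ∑ i, V i (φ t) ^ 2)
    (fun t => ?_)
    fun t => mul_nonpos_of_nonpos_of_nonneg (neg_nonpos.mpr K.cast_nonneg) (by positivity)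
  have hsq : ∑ i, V i (φ t) ^ 2 =
      C1 * ∑ i, V i (φ t) * ∑ j ∈ univ.erase i, J i j * deriv F (φ t i - φ t j)
        - Csync * ∑ i, Real.sin (K * φ t i) * V i (φ t) := by
    rw [mul_sum, mul_sum, ← sum_sub_distrib]
    refine sum_congr rfl fun i _ => ?_
    rw [sq]
    nth_rw 2 [hV_grad]
    ring
  simp only [hE]
  refine (((hasDerivAt_sum_sum_erase_pair hJ hF hFeven (hφ' t)).const_mul _).sub
    ((hasDerivAt_sum_cos_mul (K : ℝ) (hφ' t)).const_mul Csync)).congr_deriv ?_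
  rw [hsq]
  ring

/-- along any trajectory of the oscillator dynamics, the energy
`t ↦ E(φ(t))` is antitone (nonincreasing). -/
theorem stmt_2 (N : ℕ) (hN : 1 ≤ N) (K : ℕ) (hK : 0 < K) (C1 Csync : ℝ)
    (J : Fin N → Fin N → ℝ) (hJ : ∀ i j, J i j = J j i)
    (F : ℝ → ℝ) (hF : Differentiable ℝ F) (hFeven : ∀ x, F (-x) = F x)
    (S : ℝ → ℝ) (hS : ∀ x, S x = -(deriv F x))
    (E : (Fin N → ℝ) → ℝ)
    (hE : ∀ φ : Fin N → ℝ, E φ =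
      -((K : ℝ) * C1 / 2) * ∑ a, ∑ b ∈ Finset.univ.erase a, J a b * F (φ a - φ b)
        - Csync * ∑ a, Real.cos ((K : ℝ) * φ a))
    (V : Fin N → (Fin N → ℝ) → ℝ)
    (hV : ∀ (i : Fin N) (ψ : Fin N → ℝ), V i ψ =
      -C1 * ∑ j ∈ Finset.univ.erase i, J i j * S (ψ i - ψ j)
        - Csync * Real.sin ((K : ℝ) * ψ i))
    (φ : ℝ → Fin N → ℝ) (hφ : Differentiable ℝ φ)
    (hdyn : ∀ (t : ℝ) (i : Fin N), deriv (fun s => φ s i) t = V i (φ t)) :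
    Antitone (fun t => E (φ t)) :=
  stmt_2_general N K C1 Csync J hJ F hF hFeven S hS E hE V hV φ hφ hdyn
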